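/- Let V be a finite set, s ≥ 1 an integer, 0 < ε < 1, and set ε_A = ε(1−ε)/(14s). Let F : 2^V → ℝ≥0 be monotone nondecreasing and submodular, and let F̂ : 2^V → ℝ≥0 be monotone nondecreasing and satisfy |F̂(S) − F(S)| ≤ ε_A · max{F(S), OPT_1(F)} for every S ⊆ V with |S| ≤ s, where OPT_k(F) := max_{|S| ≤ k} F(S). Let v_1, …, v_s be a greedy sequence for F̂, i.e. for each i ≤ s, v_i maximizes u ↦ F̂({v_1,…,v_{i−1}} ∪ {u}) over u ∈ V ∖ {v_1,…,v_{i−1}}. Then T = {v_1,…,v_s} satisfies F(T) ≥ (1 − (1 − 1/s)^s)·(1 − ε)·OPT_s(F). -/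

import Mathlib

open Finset

/-- Submodularity of a set function. -/
def SubmodularFn {V : Type*} [DecidableEq V] (F : Finset V → ℝ) : Prop :=
  ∀ A B : Finset V, A ⊆ B → ∀ x ∉ B, F (insert x B) - F B ≤ F (insert x A) - F A

/-- Monotone nondecreasing set function. -/
def MonotoneFn {V : Type*} (F : Finset V → ℝ) : Prop :=
  ∀ A B : Finset V, A ⊆ B → F A ≤ F B

/-- `OPTF F k` : the maximum of the set function `F` over subsets of size at most `k`. -/
noncomputable def OPTF {V : Type*} [Fintype V] [DecidableEq V]
    (F : Finset V → ℝ) (k : ℕ) : ℝ :=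
  sSup {x : ℝ | ∃ S : Finset V, S.card ≤ k ∧ x = F S}

/-!
Each greedy step `T ↦ T'` only loses the oracle error twice: for every `u`,
`F (T ∪ {u}) ≤ F̂ (T ∪ {u}) + δ ≤ F̂ T' + δ ≤ F T' + 2δ` with `δ = ε_A · OPT_s(F)`
(as `OPT_1(F) ≤ OPT_s(F)`).
By submodularity some element of an optimal set raises `F T` by at least `(OPT_s − F T)/s`,
so the gap `OPT_s − F T` shrinks by the factor `1 − 1/s` up to an additive `2δ` per step.
After `s` steps the accumulated error `2 s δ = ε(1−ε)/7 · OPT_s` is absorbed by the factor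
`1 − ε`, because `(1 − 1/s)^s ≤ e⁻¹ < 1/2`.
-/

section OPTF

variable {V : Type*} [Fintype V] (F : Finset V → ℝ)

lemma finite_setOf_card_le_eq (k : ℕ) :
    {x : ℝ | ∃ S : Finset V, S.card ≤ k ∧ x = F S}.Finite :=
  (Set.finite_range F).subset <| by
    rintro _ ⟨S, -, rfl⟩
    exact ⟨S, rfl⟩

variable [DecidableEq V]

lemma le_OPTF {k : ℕ} {S : Finset V} (hS : S.card ≤ k) : F S ≤ OPTF F k :=
  le_csSup (finite_setOf_card_le_eq F k).bddAbove ⟨S, hS, rfl⟩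

lemma exists_card_le_eq_OPTF (k : ℕ) : ∃ S : Finset V, S.card ≤ k ∧ F S = OPTF F k := by
  have hne : {x : ℝ | ∃ S : Finset V, S.card ≤ k ∧ x = F S}.Nonempty :=
    ⟨F ∅, ∅, by simp, rfl⟩
  obtain ⟨S, hS, hFS⟩ := hne.csSup_mem (finite_setOf_card_le_eq F k)
  exact ⟨S, hS, hFS.symm⟩

lemma OPTF_mono {k m : ℕ} (hkm : k ≤ m) : OPTF F k ≤ OPTF F m := by
  obtain ⟨S, hS, hFS⟩ := exists_card_le_eq_OPTF F k
  exact hFS ▸ le_OPTF F (hS.trans hkm)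

end OPTF

section Submodular

variable {V : Type*} [DecidableEq V] {F : Finset V → ℝ}

lemma SubmodularFn.sub_le_sum_marginal (hsub : SubmodularFn F) (A B : Finset V) :
    F (A ∪ B) - F B ≤ ∑ u ∈ A, (F (insert u B) - F B) := by
  induction A using Finset.induction_on with
  | empty => simp
  | @insert x A hxA ih =>
    rw [sum_insert hxA, insert_union]
    by_cases hxB : x ∈ B
    · rw [insert_eq_of_mem (mem_union_right A hxB), insert_eq_of_mem hxB]
      linarith
    · have hx : x ∉ A ∪ B := by simp [hxA, hxB]
      linarith [hsub B (A ∪ B) subset_union_right x hx]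

lemma SubmodularFn.le_add_card_mul (hmono : MonotoneFn F) (hsub : SubmodularFn F)
    {S B : Finset V} {g : ℝ} (hg : ∀ u ∈ S, F (insert u B) - F B ≤ g) :
    F S ≤ F B + S.card * g := by
  have hsum := sum_le_card_nsmul S _ g hg
  rw [nsmul_eq_mul] at hsum
  linarith [hmono S (S ∪ B) subset_union_left, hsub.sub_le_sum_marginal S B]

lemma SubmodularFn.sub_le_one_sub_inv_mul_add (hmono : MonotoneFn F) (hsub : SubmodularFn F)
    {k : ℕ} (hk : 0 < k) {S B B' : Finset V} (hS : S.card ≤ k) (hBB' : B ⊆ B')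
    {η : ℝ} (hη : 0 ≤ η) (hB' : ∀ u, F (insert u B) ≤ F B' + η) :
    F S - F B' ≤ (1 - 1 / (k : ℝ)) * (F S - F B) + η := by
  have hg : 0 ≤ F B' + η - F B := by linarith [hmono B B' hBB']
  have hFS : F S ≤ F B + S.card * (F B' + η - F B) :=
    hsub.le_add_card_mul hmono fun u _ => by linarith [hB' u]
  have hcard : (S.card : ℝ) * (F B' + η - F B) ≤ k * (F B' + η - F B) := by gcongr
  have hk' : (0 : ℝ) < k := by exact_mod_cast hk
  have hgain : (F S - F B) / k ≤ F B' + η - F B := by rw [div_le_iff₀ hk']; linarith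
  have : (1 - 1 / (k : ℝ)) * (F S - F B) = F S - F B - (F S - F B) / k := by ring
  linarith

end Submodular

lemma le_pow_mul_add_of_le_mul_add {a : ℕ → ℝ} {q c : ℝ} (hq0 : 0 ≤ q) (hq1 : q ≤ 1)
    (hc : 0 ≤ c) {N : ℕ} (h : ∀ n < N, a (n + 1) ≤ q * a n + c) :
    a N ≤ q ^ N * a 0 + N * c := by
  induction N with
  | zero => simp
  | succ N ih =>
    have ihN := ih fun n hn => h n (hn.trans N.lt_succ_self)
    have hqc : q * (N * c) ≤ N * c := mul_le_of_le_one_left (by positivity) hq1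
    calc a (N + 1) ≤ q * a N + c := h N N.lt_succ_self
      _ ≤ q * (q ^ N * a 0 + N * c) + c := by gcongr
      _ ≤ q ^ (N + 1) * a 0 + (N + 1 : ℕ) * c := by push_cast; rw [pow_succ]; linarith

lemma one_sub_inv_pow_le_half {s : ℕ} (hs : 1 ≤ s) : (1 - 1 / (s : ℝ)) ^ s ≤ 1 / 2 :=
  (Real.one_sub_div_pow_le_exp_neg (by exact_mod_cast hs)).trans Real.exp_neg_one_lt_half.le

section Greedy

variable {V : Type*} [DecidableEq V] {s : ℕ} (v : Fin s → V)

def prefixSet (n : ℕ) : Finset V :=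
  (univ.filter fun j : Fin s => (j : ℕ) < n).image v

lemma card_prefixSet_le (n : ℕ) : (prefixSet v n).card ≤ n := by
  calc (prefixSet v n).card ≤ (univ.filter fun j : Fin s => (j : ℕ) < n).card :=
        card_image_le
    _ ≤ (range n).card := card_le_card_of_injOn (fun j : Fin s => (j : ℕ))
        (fun j hj => by simpa using hj) (fun _ _ _ _ h => Fin.ext h)
    _ = n := card_range n

lemma image_Iio_eq_prefixSet (i : Fin s) : (Iio i).image v = prefixSet v i := by
  unfold prefixSet
  congr 1
  ext j
  simp

lemma prefixSet_mono : Monotone (prefixSet v) := fun _ _ hmn =>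
  image_subset_image (monotone_filter_right _ fun _ _ hj => lt_of_lt_of_le hj hmn)

lemma prefixSet_succ (i : Fin s) :
    prefixSet v (i + 1) = insert (v i) (prefixSet v i) := by
  have : (univ.filter fun j : Fin s => (j : ℕ) < i + 1) =
      insert i (univ.filter fun j : Fin s => (j : ℕ) < i) := by
    ext j
    simp only [mem_filter, mem_univ, true_and, mem_insert, Fin.ext_iff]
    omega
  rw [prefixSet, this, image_insert]
  rfl

lemma prefixSet_self : prefixSet v s = univ.image v := by
  unfold prefixSet
  congr 1
  ext j
  simp

lemma prefixSet_zero : prefixSet v 0 = ∅ := by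
  simp [prefixSet]

lemma insert_le_prefixSet_succ {G : Finset V → ℝ} (hGmono : MonotoneFn G) (i : Fin s)
    (hgreedy : ∀ u : V, u ∉ (Iio i).image v →
      G (insert u ((Iio i).image v)) ≤ G (insert (v i) ((Iio i).image v)))
    (u : V) : G (insert u (prefixSet v i)) ≤ G (prefixSet v (i + 1)) := by
  rw [prefixSet_succ, ← image_Iio_eq_prefixSet]
  by_cases hu : u ∈ (Iio i).image v
  · rw [insert_eq_of_mem hu]
    exact hGmono _ _ (subset_insert _ _)
  · exact hgreedy u hu

lemma sub_prefixSet_succ_le {F Fhat : Finset V → ℝ} (hFmono : MonotoneFn F)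
    (hFsub : SubmodularFn F) (hFhmono : MonotoneFn Fhat) {S : Finset V} (hS : S.card ≤ s)
    {δ : ℝ} (hδ : 0 ≤ δ) (herr : ∀ X : Finset V, X.card ≤ s → |Fhat X - F X| ≤ δ)
    (i : Fin s)
    (hgreedy : ∀ u : V, u ∉ (Iio i).image v →
      Fhat (insert u ((Iio i).image v)) ≤ Fhat (insert (v i) ((Iio i).image v))) :
    F S - F (prefixSet v (i + 1)) ≤
      (1 - 1 / (s : ℝ)) * (F S - F (prefixSet v i)) + 2 * δ := by
  have hcard u : (insert u (prefixSet v i)).card ≤ s :=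
    (card_insert_le _ _).trans (by have := card_prefixSet_le v i; omega)
  refine hFsub.sub_le_one_sub_inv_mul_add hFmono i.pos hS
    (prefixSet_mono v (Nat.le_succ _)) (by positivity) fun u => ?_
  have hu := abs_le.mp (herr _ (hcard u))
  have hi := abs_le.mp (herr (prefixSet v (i + 1)) (prefixSet_succ v i ▸ hcard (v i)))
  linarith [insert_le_prefixSet_succ v hFhmono i hgreedy u]

end Greedy

theorem greedy_approximate_oracle_general {V : Type*} [Fintype V] [DecidableEq V]
    (s : ℕ) (hs : 1 ≤ s) (ε : ℝ) (hε0 : 0 < ε) (hε1 : ε < 1)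
    (F : Finset V → ℝ) (hFnn : ∀ S, 0 ≤ F S)
    (hFmono : MonotoneFn F) (hFsub : SubmodularFn F)
    (Fhat : Finset V → ℝ) (hFhmono : MonotoneFn Fhat)
    (happrox : ∀ S : Finset V, S.card ≤ s →
      |Fhat S - F S| ≤ (ε * (1 - ε) / (14 * (s : ℝ))) * max (F S) (OPTF F 1))
    (v : Fin s → V)
    (hgreedy : ∀ i : Fin s,
      v i ∉ (Finset.Iio i).image v ∧
      ∀ u : V, u ∉ (Finset.Iio i).image v →
        Fhat (insert u ((Finset.Iio i).image v)) ≤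
          Fhat (insert (v i) ((Finset.Iio i).image v))) :
    (1 - (1 - 1 / (s : ℝ)) ^ s) * (1 - ε) * OPTF F s ≤ F (Finset.univ.image v) := by
  obtain ⟨S, hS, hFS⟩ := exists_card_le_eq_OPTF F s
  set δ := ε * (1 - ε) / (14 * (s : ℝ)) * OPTF F s with hδ_def
  have hs0 : (0 : ℝ) < s := by exact_mod_cast hs
  have hOPT : 0 ≤ OPTF F s := (hFnn ∅).trans (le_OPTF F (by simp))
  have hεA : 0 ≤ ε * (1 - ε) / (14 * (s : ℝ)) :=
    div_nonneg (mul_nonneg hε0.le (by linarith)) (by positivity)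
  have herr : ∀ X : Finset V, X.card ≤ s → |Fhat X - F X| ≤ δ := fun X hX =>
    (happrox X hX).trans <|
      mul_le_mul_of_nonneg_left (max_le (le_OPTF F hX) (OPTF_mono F hs)) hεA
  have hδ : 0 ≤ δ := mul_nonneg hεA hOPT
  have hq0 : 0 ≤ 1 - 1 / (s : ℝ) :=
    sub_nonneg.mpr (div_le_one_of_le₀ (by exact_mod_cast hs) hs0.le)
  have hgap := le_pow_mul_add_of_le_mul_add (a := fun n => F S - F (prefixSet v n))
    hq0 (by simp [hs0.le]) (mul_nonneg zero_le_two hδ) fun n hn =>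
      sub_prefixSet_succ_le v hFmono hFsub hFhmono hS hδ herr ⟨n, hn⟩ (hgreedy _).2
  have herrsum : (s : ℝ) * (2 * δ) = ε * (1 - ε) / 7 * OPTF F s := by
    rw [hδ_def]
    field_simp
    ring
  simp only [prefixSet_self, prefixSet_zero, hFS, herrsum] at hgap
  have hq := one_sub_inv_pow_le_half hs
  have hslack : 0 ≤ 1 - (1 - 1 / (s : ℝ)) ^ s - (1 - ε) / 7 := by linarith
  nlinarith [mul_nonneg (pow_nonneg hq0 s) (hFnn ∅), mul_nonneg (mul_nonneg hε0.le hOPT) hslack]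

/-- **Greedy on an approximate oracle.**  If `F̂` is monotone and uniformly
`ε_A`-approximates the monotone submodular `F` with `ε_A = ε(1−ε)/(14s)`, then the
set of the first `s` nodes of a greedy sequence for `F̂` satisfies
`F(T) ≥ (1 − (1 − 1/s)^s)·(1 − ε)·OPT_s(F)`. -/
theorem greedy_approximate_oracle {V : Type*} [Fintype V] [DecidableEq V]
    (s : ℕ) (hs : 1 ≤ s) (ε : ℝ) (hε0 : 0 < ε) (hε1 : ε < 1)
    (F : Finset V → ℝ) (hFnn : ∀ S, 0 ≤ F S)
    (hFmono : MonotoneFn F) (hFsub : SubmodularFn F)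
    (Fhat : Finset V → ℝ) (hFhnn : ∀ S, 0 ≤ Fhat S) (hFhmono : MonotoneFn Fhat)
    (happrox : ∀ S : Finset V, S.card ≤ s →
      |Fhat S - F S| ≤ (ε * (1 - ε) / (14 * (s : ℝ))) * max (F S) (OPTF F 1))
    (v : Fin s → V)
    (hgreedy : ∀ i : Fin s,
      v i ∉ (Finset.Iio i).image v ∧
      ∀ u : V, u ∉ (Finset.Iio i).image v →
        Fhat (insert u ((Finset.Iio i).image v)) ≤
          Fhat (insert (v i) ((Finset.Iio i).image v))) :
    (1 - (1 - 1 / (s : ℝ)) ^ s) * (1 - ε) * OPTF F s ≤ F (Finset.univ.image v) :=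
  greedy_approximate_oracle_general s hs ε hε0 hε1 F hFnn hFmono hFsub Fhat hFhmono happrox v
    hgreedy
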